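/- The maximum aggregation function max : [0,1]^{<ω} → [0,1] is not strongly admissible: there exist two convergence testing sequences r̄_n and ρ̄_n with the same parameters (c₁,c₂) = (0,1), (α₁,α₂) = (1,0) such that |max(r̄_n) − max(ρ̄_n)| = 1 for all n. Concretely one may take r̄_n = (0,…,0) of length n+1 and ρ̄_n = (0,…,0,1) of length n+1. -/

import Mathlib

/-!
A bounded number of ones appended to a growing block of zeros has vanishing proportion, so
`(0,…,0)` and `(0,…,0,1)` test the same parameters; yet `max` sees the single `1`.
-/

open Filter

open Classical in
noncomputable def countIn (l : List ℝ) (S : Set ℝ) : ℝ :=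
  (l.map (fun x => if x ∈ S then (1:ℝ) else 0)).sum

def IsOpenInterval01 (S : Set ℝ) : Prop :=
  S ⊆ Set.Icc 0 1 ∧ S.OrdConnected ∧ ∃ U : Set ℝ, IsOpen U ∧ S = U ∩ Set.Icc 0 1

def ConvergenceTesting (r : ℕ → List ℝ) (k : ℕ) (c α : Fin k → ℝ) : Prop :=
  (∀ n, r n ≠ [] ∧ ∀ x ∈ r n, x ∈ Set.Icc (0:ℝ) 1) ∧
  (∀ n, (r n).length < (r (n+1)).length) ∧
  ∀ I : Fin k → Set ℝ,
    (∀ j, IsOpenInterval01 (I j)) →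
    (Pairwise fun i j => Disjoint (I i) (I j)) →
    (∀ j, c j ∈ I j) →
    (∃ N : ℕ, ∀ n ≥ N, ∀ x ∈ r n, x ∈ ⋃ j, I j) ∧
    ∀ j, Tendsto (fun n => countIn (r n) (I j) / (r n).length) atTop (nhds (α j))

/-- The maximum aggregation function on finite sequences in `[0,1]`. -/
def maxAgg (l : List ℝ) : ℝ := l.foldr max 0

lemma countIn_append (l l' : List ℝ) (S : Set ℝ) :
    countIn (l ++ l') S = countIn l S + countIn l' S := by
  simp [countIn]

open Classical in
lemma countIn_replicate (n : ℕ) (a : ℝ) (S : Set ℝ) :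
    countIn (List.replicate n a) S = if a ∈ S then (n : ℝ) else 0 := by
  split_ifs with h <;> simp [countIn, List.map_replicate, List.sum_replicate, h]

lemma maxAgg_nonneg (l : List ℝ) : 0 ≤ maxAgg l := by
  induction l with
  | nil => exact le_rfl
  | cons x l ih => exact ih.trans (le_max_right x _)

lemma maxAgg_replicate_zero_append (n : ℕ) (l : List ℝ) :
    maxAgg (List.replicate n 0 ++ l) = maxAgg l := by
  induction n with
  | zero => rfl
  | succ n ih =>
    rw [List.replicate_succ, List.cons_append, maxAgg, List.foldr_cons, ← maxAgg, ih]
    exact max_eq_right (maxAgg_nonneg l)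

lemma convergenceTesting_replicate_zero_append_replicate_one (a b : ℕ) (hab : 0 < a + b) :
    ConvergenceTesting (fun n => List.replicate (n + a) 0 ++ List.replicate b 1)
      2 ![0, 1] ![1, 0] := by
  classical
  have mem_zero_one : ∀ n, ∀ x ∈ List.replicate (n + a) (0:ℝ) ++ List.replicate b 1,
      x = 0 ∨ x = 1 := by
    intro n x hx
    rcases List.mem_append.1 hx with h | h
    · exact .inl (List.eq_of_mem_replicate h)
    · exact .inr (List.eq_of_mem_replicate h)
  refine ⟨fun n => ⟨?_, ?_⟩, fun n => ?_, fun I _ hdisj hc => ?_⟩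
  · simp only [ne_eq, List.append_eq_nil_iff, List.replicate_eq_nil_iff, not_and]
    omega
  · intro x hx
    rcases mem_zero_one n x hx with rfl | rfl <;> norm_num
  · simp only [List.length_append, List.length_replicate]
    omega
  have h0 : (0:ℝ) ∈ I 0 := hc 0
  have h1 : (1:ℝ) ∈ I 1 := hc 1
  have hdisj01 : Disjoint (I 0) (I 1) := hdisj (by decide)
  have h0' : (0:ℝ) ∉ I 1 := Set.disjoint_left.1 hdisj01 h0
  have h1' : (1:ℝ) ∉ I 0 := Set.disjoint_right.1 hdisj01 h1
  refine ⟨⟨0, fun n _ x hx => ?_⟩, fun j => ?_⟩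
  · rcases mem_zero_one n x hx with rfl | rfl
    · exact Set.mem_iUnion.2 ⟨0, h0⟩
    · exact Set.mem_iUnion.2 ⟨1, h1⟩
  fin_cases j
  · have hcount : ∀ n, countIn (List.replicate (n + a) 0 ++ List.replicate b 1) (I 0) /
        (List.replicate (n + a) (0:ℝ) ++ List.replicate b 1).length
        = ((n + a : ℕ) : ℝ) / ((n + a : ℕ) + b) := by
      intro n
      simp [countIn_append, countIn_replicate, h0, h1']
    exact ((tendsto_natCast_div_add_atTop (b : ℝ)).comp (tendsto_add_atTop_nat a)).congr
      fun n => (hcount n).symm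
  · have hcount : ∀ n, countIn (List.replicate (n + a) 0 ++ List.replicate b 1) (I 1) /
        (List.replicate (n + a) (0:ℝ) ++ List.replicate b 1).length
        = (b : ℝ) / ((n + (a + b) : ℕ) : ℝ) := by
      intro n
      simp [countIn_append, countIn_replicate, h0', h1, add_assoc]
    exact ((tendsto_const_div_atTop_nhds_zero_nat (b : ℝ)).comp
      (tendsto_add_atTop_nat (a + b))).congr fun n => (hcount n).symm

/-- The maximum aggregation function is not strongly admissible: there are two
convergence testing sequences with the same parameters `(c₁,c₂) = (0,1)`,
`(α₁,α₂) = (1,0)` — concretely `r̄_n = (0,…,0)` of length `n+1` and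
`ρ̄_n = (0,…,0,1)` of length `n+1` — on which the values of `max` differ by `1`
for every `n`. -/
theorem max_not_strongly_admissible :
    ∃ r ρ : ℕ → List ℝ,
      (∀ n, r n = List.replicate (n + 1) (0:ℝ)) ∧
      (∀ n, ρ n = List.replicate n (0:ℝ) ++ [1]) ∧
      ConvergenceTesting r 2 ![0, 1] ![1, 0] ∧
      ConvergenceTesting ρ 2 ![0, 1] ![1, 0] ∧
      ∀ n, |maxAgg (r n) - maxAgg (ρ n)| = 1 := by
  refine ⟨fun n => List.replicate (n + 1) 0, fun n => List.replicate n 0 ++ [1],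
    fun _ => rfl, fun _ => rfl, ?_, ?_, fun n => ?_⟩
  · simpa using convergenceTesting_replicate_zero_append_replicate_one 1 0 one_pos
  · simpa using convergenceTesting_replicate_zero_append_replicate_one 0 1 one_pos
  · have hr : maxAgg (List.replicate (n + 1) 0) = 0 := by
      rw [← List.append_nil (List.replicate _ _), maxAgg_replicate_zero_append]
      rfl
    have hρ : maxAgg (List.replicate n 0 ++ [1]) = 1 := by
      rw [maxAgg_replicate_zero_append]
      exact max_eq_left zero_le_one
    simp [hr, hρ]
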